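/- arXiv:2112.04884 — 7 statements merged into one kernel-verified Lean document; each statement's English description precedes it below -/
import Mathlib

section
/- Let X be a separable infinite-dimensional Banach space and T₁,…,T_N bounded linear operators on X (N ≥ 2). If T₁,…,T_N are d-topologically transitive, then they are densely d-hypercyclic; i.e., the set of vectors x such that {(T₁ⁿx,…,T_Nⁿx) : n ∈ ℕ} is dense in X^N is itself dense in X. -/
/-! Birkhoff's transitivity argument: for a countable basis `b` of `X^N`, the d-hypercyclic
vectors are exactly `⋂ U ∈ b, ⋃ n, (T₁ⁿ, …, T_Nⁿ)⁻¹' U`. Each of these unions is open, and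
d-transitivity says it is dense, since every nonempty open subset of `X^N` contains a nonempty
box `U₁ × ⋯ × U_N`; the Baire category theorem then makes the intersection dense. -/

open Set TopologicalSpace

theorem TopologicalSpace.IsTopologicalBasis.setOf_dense_range_eq_biInter
    {X Y : Type*} [TopologicalSpace Y] {b : Set (Set Y)} (hb : IsTopologicalBasis b)
    (hempty : ∅ ∉ b) (F : ℕ → X → Y) :
    {x | Dense (range fun n => F n x)} = ⋂ U ∈ b, ⋃ n, F n ⁻¹' U := by
  ext x
  simp only [mem_ofPred_eq, hb.dense_iff, mem_iInter, mem_iUnion, mem_preimage]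
  refine forall₂_congr fun U hU => ?_
  have hUne : U.Nonempty := nonempty_iff_ne_empty.2 fun h => hempty (h ▸ hU)
  simp only [hUne, true_implies, inter_nonempty, mem_range]
  exact ⟨fun ⟨_, hy, n, hn⟩ => ⟨n, hn ▸ hy⟩, fun ⟨n, hn⟩ => ⟨_, hn, n, rfl⟩⟩

theorem dense_setOf_dense_range_of_transitive {X Y : Type*} [TopologicalSpace X]
    [BaireSpace X] [TopologicalSpace Y] [SecondCountableTopology Y]
    (F : ℕ → X → Y) (hF : ∀ n, Continuous (F n))
    (htrans : ∀ V U, IsOpen V → V.Nonempty → IsOpen U → U.Nonempty →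
      ∃ n, (V ∩ F n ⁻¹' U).Nonempty) :
    Dense {x | Dense (range fun n => F n x)} := by
  obtain ⟨b, hbc, hempty, hb⟩ := exists_countable_basis Y
  rw [hb.setOf_dense_range_eq_biInter hempty]
  refine dense_biInter_of_isOpen (fun U hU => ?_) hbc (fun U hU => ?_)
  · exact isOpen_iUnion fun n => (hb.isOpen hU).preimage (hF n)
  · refine dense_iff_inter_open.2 fun V hV hVne => ?_
    have hUne : U.Nonempty := nonempty_iff_ne_empty.2 fun h => hempty (h ▸ hU)
    obtain ⟨n, x, hxV, hxU⟩ := htrans V U hV hVne (hb.isOpen hU) hUne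
    exact ⟨x, hxV, mem_iUnion.2 ⟨n, hxU⟩⟩

theorem transitive_pi_of_forall_transitive {ι X : Type*} [Finite ι] {Y : ι → Type*}
    [TopologicalSpace X] [∀ i, TopologicalSpace (Y i)] (f : ∀ i, ℕ → X → Y i)
    (htrans : ∀ (V : Set X) (U : ∀ i, Set (Y i)),
      IsOpen V → V.Nonempty → (∀ i, IsOpen (U i)) → (∀ i, (U i).Nonempty) →
      ∃ n, (V ∩ ⋂ i, f i n ⁻¹' U i).Nonempty)
    (V : Set X) (U : Set (∀ i, Y i)) (hV : IsOpen V) (hVne : V.Nonempty) (hU : IsOpen U)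
    (hUne : U.Nonempty) :
    ∃ n, (V ∩ (fun x i => f i n x) ⁻¹' U).Nonempty := by
  obtain ⟨y, hy⟩ := hUne
  obtain ⟨W, hW, hWU⟩ := isOpen_pi_iff'.1 hU y hy
  obtain ⟨n, x, hxV, hxW⟩ :=
    htrans V W hV hVne (fun i => (hW i).1) (fun i => ⟨y i, (hW i).2⟩)
  exact ⟨n, x, hxV, hWU fun i _ => mem_iInter.1 hxW i⟩

theorem stmt0_general {X : Type*} [NormedAddCommGroup X] [NormedSpace ℂ X]
    [CompleteSpace X] [TopologicalSpace.SeparableSpace X]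
    (N : ℕ) (T : Fin N → X →L[ℂ] X)
    (htrans : ∀ (V0 : Set X) (U : Fin N → Set X),
      IsOpen V0 → V0.Nonempty → (∀ i, IsOpen (U i)) → (∀ i, (U i).Nonempty) →
      ∃ n : ℕ, (V0 ∩ ⋂ i, (T i ^ n) ⁻¹' (U i)).Nonempty) :
    Dense {x : X | Dense (Set.range fun n : ℕ => fun i : Fin N => (T i ^ n) x)} :=
  dense_setOf_dense_range_of_transitive (fun n x i => (T i ^ n) x)
    (fun n => continuous_pi fun i => (T i ^ n).continuous)
    (transitive_pi_of_forall_transitive (fun i n => ⇑(T i ^ n)) htrans)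

/-- If `T₁, …, T_N` are d-topologically transitive bounded operators on a separable
infinite-dimensional Banach space, then the set of d-hypercyclic vectors is dense. -/
theorem stmt0 {X : Type*} [NormedAddCommGroup X] [NormedSpace ℂ X]
    [CompleteSpace X] [TopologicalSpace.SeparableSpace X]
    (hinf : ¬ FiniteDimensional ℂ X)
    (N : ℕ) (hN : 2 ≤ N) (T : Fin N → X →L[ℂ] X)
    (htrans : ∀ (V0 : Set X) (U : Fin N → Set X),
      IsOpen V0 → V0.Nonempty → (∀ i, IsOpen (U i)) → (∀ i, (U i).Nonempty) →
      ∃ n : ℕ, (V0 ∩ ⋂ i, (T i ^ n) ⁻¹' (U i)).Nonempty) :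
    Dense {x : X | Dense (Set.range fun n : ℕ => fun i : Fin N => (T i ^ n) x)} :=
  stmt0_general N T htrans
end

section
/- Let X be a Banach space and T₁,…,T_N ∈ B(X) with N ≥ 2. Suppose there exist a strictly increasing sequence (n_k) of positive integers, a dense subset X₀ of X, and maps S_k : X₀^N → X such that: (i) for each x ∈ X₀ and 1 ≤ i ≤ N, Tᵢ^{n_k} x → 0 as k → ∞; and (ii) for each ε > 0, K ∈ ℕ, and x₁,…,x_N ∈ X₀ there exists k ≥ K with ‖S_k(x₁,…,x_N)‖ < ε and ‖Tᵢ^{n_k} S_k(x₁,…,x_N) − xᵢ‖ < ε for all 1 ≤ i ≤ N. Then T₁,…,T_N satisfy the Strong Disjoint Blow-up/Collapse Property. -/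
open Filter Topology

/-!
Pick points of the dense set `X₀` in the open sets. Condition (i) makes every orbit
`Tᵢ^{n_k} y` of such a point fall into the neighbourhood `W` of `0` for all large `k`, while
condition (ii) yields arbitrarily large `k` for which `S_k x` lies in `W` and is mapped by each
`Tᵢ^{n_k}` into `U'ᵢ`. One such `k` serves for both requirements with `n = n_k`.
-/

namespace Dense

variable {X ι : Type*}

theorem eventually_nonempty_inter_iInter_preimage [TopologicalSpace X] [Finite ι]
    {α : Type*} {l : Filter α} {F : α → ι → X → X} {X₀ : Set X} (hX₀ : Dense X₀) {a : X}
    (hF : ∀ x ∈ X₀, ∀ i, Tendsto (fun k => F k i x) l (𝓝 a)) {W U : Set X} (hW : W ∈ 𝓝 a)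
    (hU : IsOpen U) (hU' : U.Nonempty) :
    ∀ᶠ k in l, (U ∩ ⋂ i, F k i ⁻¹' W).Nonempty := by
  obtain ⟨y, hyU, hyX⟩ := hX₀.inter_open_nonempty U hU hU'
  filter_upwards [eventually_all.2 fun i => hF y hyX i hW] with k hk
  exact ⟨y, hyU, Set.mem_iInter.2 hk⟩

theorem frequently_nonempty_inter_iInter_preimage [SeminormedAddCommGroup X] [Fintype ι]
    {F : ℕ → ι → X → X} {S : ℕ → (ι → X) → X} {X₀ : Set X} (hX₀ : Dense X₀)
    (hS : ∀ ε > (0 : ℝ), ∀ K : ℕ, ∀ x : ι → X, (∀ i, x i ∈ X₀) →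
      ∃ k ≥ K, ‖S k x‖ < ε ∧ ∀ i, ‖F k i (S k x) - x i‖ < ε)
    {W : Set X} (hW : W ∈ 𝓝 0) {U : ι → Set X} (hU : ∀ i, IsOpen (U i))
    (hU' : ∀ i, (U i).Nonempty) :
    ∃ᶠ k in atTop, (W ∩ ⋂ i, F k i ⁻¹' U i).Nonempty := by
  choose x hxU hxX using fun i => hX₀.inter_open_nonempty (U i) (hU i) (hU' i)
  obtain ⟨δ, hδ, hδW⟩ := Metric.mem_nhds_iff.mp hW
  obtain ⟨η, hη, hηU⟩ := Metric.isOpen_iff.mp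
    (isOpen_set_pi Set.finite_univ fun i _ => hU i) x fun i _ => hxU i
  rw [frequently_atTop]
  intro K
  obtain ⟨k, hkK, hSW, hSU⟩ := hS (min δ η) (lt_min hδ hη) K x hxX
  have hball : (fun i => F k i (S k x)) ∈ Metric.ball x η := by
    rw [Metric.mem_ball, dist_pi_lt_iff hη]
    exact fun i => by simpa [dist_eq_norm] using (hSU i).trans_le (min_le_right _ _)
  refine ⟨k, hkK, S k x, hδW (mem_ball_zero_iff.2 (hSW.trans_le (min_le_left _ _))), ?_⟩
  exact Set.mem_iInter.2 fun i => hηU hball i (Set.mem_univ i)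

end Dense

theorem stmt1_general {X : Type*} [NormedAddCommGroup X] [NormedSpace ℂ X]
    (N : ℕ) (T : Fin N → X →L[ℂ] X)
    (n : ℕ → ℕ)
    (X₀ : Set X) (hdense : Dense X₀)
    (S : ℕ → (Fin N → X) → X)
    (h1 : ∀ x ∈ X₀, ∀ i, Tendsto (fun k => (T i ^ n k) x) atTop (𝓝 0))
    (h2 : ∀ ε > (0 : ℝ), ∀ K : ℕ, ∀ x : Fin N → X, (∀ i, x i ∈ X₀) →
      ∃ k ≥ K, ‖S k x‖ < ε ∧ ∀ i, ‖(T i ^ n k) (S k x) - x i‖ < ε) :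
    ∀ (L : ℕ) (W : Set X) (U : Fin L → Set X) (U' : Fin N → Set X),
      IsOpen W → (0 : X) ∈ W →
      (∀ ℓ, IsOpen (U ℓ)) → (∀ ℓ, (U ℓ).Nonempty) →
      (∀ i, IsOpen (U' i)) → (∀ i, (U' i).Nonempty) →
      ∃ m : ℕ, (W ∩ ⋂ i, (T i ^ m) ⁻¹' (U' i)).Nonempty ∧
        ∀ ℓ : Fin L, (U ℓ ∩ ⋂ i, (T i ^ m) ⁻¹' W).Nonempty := by
  intro L W U U' hW hW0 hU hU' hV hV'
  have hWnhds : W ∈ 𝓝 0 := hW.mem_nhds hW0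
  have hblowup := hdense.frequently_nonempty_inter_iInter_preimage
    (F := fun k i => ⇑(T i ^ n k)) h2 hWnhds hV hV'
  have hcollapse := eventually_all.2 fun ℓ =>
    hdense.eventually_nonempty_inter_iInter_preimage (F := fun k i => ⇑(T i ^ n k))
      h1 hWnhds (hU ℓ) (hU' ℓ)
  obtain ⟨k, hkW, hkU⟩ := (hblowup.and_eventually hcollapse).exists
  exact ⟨n k, hkW, hkU⟩

/-- Disjoint Blow-up/Collapse Criterion implies the Strong Disjoint Blow-up/Collapse
Property. -/
theorem stmt1 {X : Type*} [NormedAddCommGroup X] [NormedSpace ℂ X] [CompleteSpace X]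
    (N : ℕ) (hN : 2 ≤ N) (T : Fin N → X →L[ℂ] X)
    (n : ℕ → ℕ) (hmono : StrictMono n) (hpos : ∀ k, 0 < n k)
    (X₀ : Set X) (hdense : Dense X₀)
    (S : ℕ → (Fin N → X) → X)
    (h1 : ∀ x ∈ X₀, ∀ i, Tendsto (fun k => (T i ^ n k) x) atTop (𝓝 0))
    (h2 : ∀ ε > (0 : ℝ), ∀ K : ℕ, ∀ x : Fin N → X, (∀ i, x i ∈ X₀) →
      ∃ k ≥ K, ‖S k x‖ < ε ∧ ∀ i, ‖(T i ^ n k) (S k x) - x i‖ < ε) :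
    ∀ (L : ℕ) (W : Set X) (U : Fin L → Set X) (U' : Fin N → Set X),
      IsOpen W → (0 : X) ∈ W →
      (∀ ℓ, IsOpen (U ℓ)) → (∀ ℓ, (U ℓ).Nonempty) →
      (∀ i, IsOpen (U' i)) → (∀ i, (U' i).Nonempty) →
      ∃ m : ℕ, (W ∩ ⋂ i, (T i ^ m) ⁻¹' (U' i)).Nonempty ∧
        ∀ ℓ : Fin L, (U ℓ ∩ ⋂ i, (T i ^ m) ⁻¹' W).Nonempty :=
  stmt1_general N T n X₀ hdense S h1 h2
end

section
/- Let X be a Banach space and T₁,…,T_N ∈ B(X) with N ≥ 2. Suppose there exist a strictly increasing sequence (n_k) of positive integers, a dense subset X₀ of X, and maps S_k : X₀ → X such that: (i) for each x ∈ X₀ and 1 ≤ i ≤ N, Tᵢ^{n_k} x → 0 as k → ∞; and (ii) for each ε > 0, K ∈ ℕ, and x₀ ∈ X₀ there exists k ≥ K with ‖S_k(x₀)‖ < ε and ‖Tᵢ^{n_k} S_k(x₀) − x₀‖ < ε for every 1 ≤ i ≤ N. Then T₁,…,T_N satisfy the Simultaneous Blow-up/Collapse Property. -/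
/-!
Pick `u ∈ X₀ ∩ U` and `v ∈ X₀ ∩ V`. Condition (ii) yields arbitrarily large `k` with
`S k u ∈ W` and `Tᵢ^{n k} (S k u) ∈ U` for all `i`, while condition (i) puts every
`Tᵢ^{n k} v` in `W` for all large `k`; a common `k` gives both intersections with `m = n k`.
-/

open Filter Topology

theorem frequently_mem_of_forall_norm_lt {E ι : Type*} [SeminormedAddCommGroup E]
    {f : ℕ → E} {g : ℕ → ι → E} {x : E}
    (h : ∀ ε > (0 : ℝ), ∀ K : ℕ, ∃ k ≥ K, ‖f k‖ < ε ∧ ∀ i, ‖g k i - x‖ < ε)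
    {W U : Set E} (hW : W ∈ 𝓝 0) (hU : U ∈ 𝓝 x) :
    ∃ᶠ k in atTop, f k ∈ W ∧ ∀ i, g k i ∈ U := by
  obtain ⟨ε₁, hε₁, hballW⟩ := Metric.mem_nhds_iff.1 hW
  obtain ⟨ε₂, hε₂, hballU⟩ := Metric.mem_nhds_iff.1 hU
  refine frequently_atTop.2 fun K => ?_
  obtain ⟨k, hkK, hf, hg⟩ := h (min ε₁ ε₂) (lt_min hε₁ hε₂) K
  refine ⟨k, hkK, hballW ?_, fun i => hballU ?_⟩
  · exact mem_ball_zero_iff.2 (hf.trans_le (min_le_left _ _))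
  · exact mem_ball_iff_norm.2 ((hg i).trans_le (min_le_right _ _))

theorem stmt2_general {X : Type*} [NormedAddCommGroup X] [NormedSpace ℂ X]
    (N : ℕ) (T : Fin N → X →L[ℂ] X)
    (n : ℕ → ℕ)
    (X₀ : Set X) (hdense : Dense X₀)
    (S : ℕ → X → X)
    (h1 : ∀ x ∈ X₀, ∀ i, Tendsto (fun k => (T i ^ n k) x) atTop (𝓝 0))
    (h2 : ∀ ε > (0 : ℝ), ∀ K : ℕ, ∀ x₀ ∈ X₀,
      ∃ k ≥ K, ‖S k x₀‖ < ε ∧ ∀ i, ‖(T i ^ n k) (S k x₀) - x₀‖ < ε) :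
    ∀ (W U V : Set X),
      IsOpen W → (0 : X) ∈ W → IsOpen U → U.Nonempty → IsOpen V → V.Nonempty →
      ∃ m : ℕ, (W ∩ ⋂ i, (T i ^ m) ⁻¹' U).Nonempty ∧
        (V ∩ ⋂ i, (T i ^ m) ⁻¹' W).Nonempty := by
  intro W U V hW hW0 hU hUne hV hVne
  obtain ⟨u, huX₀, huU⟩ := hdense.exists_mem_open hU hUne
  obtain ⟨v, hvX₀, hvV⟩ := hdense.exists_mem_open hV hVne
  have hblowup : ∃ᶠ k in atTop, S k u ∈ W ∧ ∀ i, (T i ^ n k) (S k u) ∈ U :=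
    frequently_mem_of_forall_norm_lt (fun ε hε K => h2 ε hε K u huX₀)
      (hW.mem_nhds hW0) (hU.mem_nhds huU)
  have hcollapse : ∀ᶠ k in atTop, ∀ i, (T i ^ n k) v ∈ W :=
    eventually_all.2 fun i => h1 v hvX₀ i (hW.mem_nhds hW0)
  obtain ⟨k, ⟨hSW, hSU⟩, hvW⟩ := (hblowup.and_eventually hcollapse).exists
  exact ⟨n k, ⟨S k u, hSW, Set.mem_iInter.2 hSU⟩, ⟨v, hvV, Set.mem_iInter.2 hvW⟩⟩

/-- Simultaneous Blow-up/Collapse Criterion implies the Simultaneous Blow-up/Collapse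
Property. -/
theorem stmt2 {X : Type*} [NormedAddCommGroup X] [NormedSpace ℂ X] [CompleteSpace X]
    (N : ℕ) (hN : 2 ≤ N) (T : Fin N → X →L[ℂ] X)
    (n : ℕ → ℕ) (hmono : StrictMono n) (hpos : ∀ k, 0 < n k)
    (X₀ : Set X) (hdense : Dense X₀)
    (S : ℕ → X → X)
    (h1 : ∀ x ∈ X₀, ∀ i, Tendsto (fun k => (T i ^ n k) x) atTop (𝓝 0))
    (h2 : ∀ ε > (0 : ℝ), ∀ K : ℕ, ∀ x₀ ∈ X₀,
      ∃ k ≥ K, ‖S k x₀‖ < ε ∧ ∀ i, ‖(T i ^ n k) (S k x₀) - x₀‖ < ε) :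
    ∀ (W U V : Set X),
      IsOpen W → (0 : X) ∈ W → IsOpen U → U.Nonempty → IsOpen V → V.Nonempty →
      ∃ m : ℕ, (W ∩ ⋂ i, (T i ^ m) ⁻¹' U).Nonempty ∧
        (V ∩ ⋂ i, (T i ^ m) ⁻¹' W).Nonempty :=
  stmt2_general N T n X₀ hdense S h1 h2
end

section
/- Let T₁,…,T_N (N ≥ 2) be unilateral pseudo-shifts on ℓ^p(ℕ) with maps f₁,…,f_N and weights ω^{(i)}. If T₁,…,T_N possess a d-hypercyclic vector x = Σ_m α_m e_m, then there exists a strictly increasing sequence (n_k) of positive integers such that for all integers i, m with 1 ≤ i ≤ N, |W^{(i)}_{m,n_k}| = |∏_{ν=1}^{n_k} w^{(i)}_{f_i^ν(m)}| → ∞ as k → ∞. -/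
/-!
The `m`-th coordinate of `Tᵢⁿ x` is `W⁽ⁱ⁾_{m,n} · α_{fᵢⁿ(m)}` and `|α_j| ≤ ‖x‖`. Hence if
`(T₁ⁿ x, …, T_Nⁿ x)` lies within `1` of `(y, …, y)`, where `y = a · ∑_{m ∈ s} e_m` for a finite
set `s` and a scalar `a` of huge modulus, then `|a| - 1 ≤ |W⁽ⁱ⁾_{m,n}| (‖x‖ + 1)` for all `i` and all `m ∈ s`. A dense
orbit in a space without isolated points visits this neighbourhood at arbitrarily late times, and
a diagonal extraction over `s = {1, …, k + 1}` and `|a| → ∞` gives the sequence `(n_k)`.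
-/

open Filter Topology
open scoped ENNReal

theorem Dense.frequently_mem {X : Type*} [TopologicalSpace X] [T1Space X]
    [∀ x : X, NeBot (𝓝[≠] x)] {u : ℕ → X} (hu : Dense (Set.range u)) {U : Set X}
    (hU : IsOpen U) (hne : U.Nonempty) : ∃ᶠ n in atTop, u n ∈ U := by
  refine frequently_atTop.2 fun a => ?_
  have hlate : Dense (Set.range u \ u '' Set.Iio a) :=
    hu.sdiff_finite ((Set.finite_Iio a).image u)
  obtain ⟨_, hzU, ⟨n, rfl⟩, hn⟩ := hlate.inter_open_nonempty U hU hne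
  exact ⟨n, not_lt.1 fun h => hn ⟨n, h, rfl⟩, hzU⟩

section PseudoShift

variable {𝕜 : Type*} [NontriviallyNormedField 𝕜] {ι : Type*} {p : ℝ≥0∞}

def weightProd (w : ι → 𝕜) (f : ι → ι) (m : ι) (n : ℕ) : 𝕜 :=
  ∏ ν ∈ Finset.Icc 1 n, w (f^[ν] m)

theorem weightProd_succ (w : ι → 𝕜) (f : ι → ι) (m : ι) (n : ℕ) :
    weightProd w f m (n + 1) = weightProd w f m n * w (f^[n + 1] m) :=
  Finset.prod_Icc_succ_top (Nat.le_add_left 1 n) _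

theorem lp.coeFn_sum_single_of_mem [DecidableEq ι] {s : Finset ι} {m : ι} (hm : m ∈ s)
    (a : 𝕜) : (∑ j ∈ s, lp.single p j a : lp (fun _ : ι => 𝕜) p) m = a := by
  rw [lp.coeFn_sum, Finset.sum_apply, Finset.sum_eq_single_of_mem m hm
    fun j _ hj => lp.single_apply_ne (E := fun _ => 𝕜) p j a hj.symm, lp.single_apply_self]

variable [Fact (1 ≤ p)]

instance [Nonempty ι] : Nontrivial (lp (fun _ : ι => 𝕜) p) := by
  classical
  exact ⟨⟨lp.single p (Classical.arbitrary ι) 1, 0, fun h => by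
    simpa using congrArg (· (Classical.arbitrary ι)) h⟩⟩

theorem pow_apply_eq_weightProd_mul {w : ι → 𝕜} {f : ι → ι}
    {T : lp (fun _ : ι => 𝕜) p →L[𝕜] lp (fun _ : ι => 𝕜) p}
    (hT : ∀ x m, T x m = w (f m) * x (f m)) (n : ℕ) (x : lp (fun _ : ι => 𝕜) p) (m : ι) :
    (T ^ n) x m = weightProd w f m n * x (f^[n] m) := by
  induction n generalizing x with
  | zero => simp [weightProd]
  | succ n ih =>
    rw [pow_succ, mul_apply_eq_comp, ih, hT, weightProd_succ,
      Function.iterate_succ_apply' f n m, mul_assoc]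

theorem frequently_le_norm_weightProd [Nonempty ι] {κ : Type*} [Fintype κ] [Nonempty κ]
    {f : κ → ι → ι} {w : κ → ι → 𝕜} {T : κ → lp (fun _ : ι => 𝕜) p →L[𝕜] lp (fun _ : ι => 𝕜) p}
    (hT : ∀ i x m, T i x m = w i (f i m) * x (f i m)) {x : lp (fun _ : ι => 𝕜) p}
    (hx : Dense (Set.range fun n : ℕ => fun i => (T i ^ n) x)) (s : Finset ι) (R : ℝ) :
    ∃ᶠ n in atTop, ∀ i, ∀ m ∈ s, R ≤ ‖weightProd (w i) (f i) m n‖ := by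
  classical
  have := Module.punctured_nhds_neBot 𝕜 (κ → lp (fun _ : ι => 𝕜) p)
  have hp : p ≠ 0 := (zero_lt_one.trans_le Fact.out).ne'
  obtain ⟨a, ha⟩ := NormedField.exists_lt_norm 𝕜 (R * (‖x‖ + 1) + 1)
  set y : lp (fun _ : ι => 𝕜) p := ∑ j ∈ s, lp.single p j a
  have hU : IsOpen (⋂ i, (fun z : κ → lp (fun _ : ι => 𝕜) p => z i) ⁻¹' Metric.ball y 1) :=
    isOpen_iInter_of_finite fun i => Metric.isOpen_ball.preimage (continuous_apply i)
  refine (hx.frequently_mem hU ⟨fun _ => y, by simp⟩).mono fun n hn i m hm => ?_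
  have hnear : ‖(T i ^ n) x - y‖ < 1 := mem_ball_iff_norm.1 (Set.mem_iInter.1 hn i)
  have hclose : ‖weightProd (w i) (f i) m n * x ((f i)^[n] m) - a‖ < 1 := by
    rw [← pow_apply_eq_weightProd_mul (hT i), ← lp.coeFn_sum_single_of_mem (p := p) hm a]
    exact (lp.norm_apply_le_norm hp ((T i ^ n) x - y) m).trans_lt hnear
  have hcoord : ‖x ((f i)^[n] m)‖ ≤ ‖x‖ + 1 := (lp.norm_apply_le_norm hp x _).trans (by simp)
  have hle : ‖a‖ ≤ ‖weightProd (w i) (f i) m n‖ * ‖x ((f i)^[n] m)‖ + 1 := by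
    have := norm_sub_norm_le a (weightProd (w i) (f i) m n * x ((f i)^[n] m))
    rw [norm_sub_rev, norm_mul] at this
    linarith
  by_contra! hsmall
  have hprod := mul_le_mul_of_nonneg_left hcoord (norm_nonneg (weightProd (w i) (f i) m n))
  have hsmall' := mul_lt_mul_of_pos_right hsmall (by positivity : 0 < ‖x‖ + 1)
  linarith

end PseudoShift

theorem stmt8_general (p : ℝ≥0∞) [Fact (1 ≤ p)] (N : ℕ) (hN : 2 ≤ N)
    (f : Fin N → ℕ+ → ℕ+)
    (w : Fin N → ℕ+ → ℂ)
    (T : Fin N → (lp (fun _ : ℕ+ => ℂ) p →L[ℂ] lp (fun _ : ℕ+ => ℂ) p))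
    (hT : ∀ i (x : lp (fun _ : ℕ+ => ℂ) p) (m : ℕ+),
      (T i x : ∀ _ : ℕ+, ℂ) m = w i (f i m) * (x : ∀ _ : ℕ+, ℂ) (f i m))
    (x : lp (fun _ : ℕ+ => ℂ) p)
    (hx : Dense (Set.range fun nn : ℕ => fun i : Fin N => (T i ^ nn) x)) :
    ∃ n : ℕ → ℕ, StrictMono n ∧ (∀ k, 0 < n k) ∧
      ∀ i m, Tendsto
        (fun k => ‖∏ ν ∈ Finset.Icc 1 (n k), w i ((f i)^[ν] m)‖) atTop atTop := by
  have : Nonempty (Fin N) := ⟨⟨0, by omega⟩⟩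
  have hfreq (k : ℕ) : ∃ᶠ n in atTop, 0 < n ∧
      ∀ i, ∀ m ∈ Finset.Iic k.succPNat, (k : ℝ) ≤ ‖weightProd (w i) (f i) m n‖ :=
    (eventually_gt_atTop 0).and_frequently (frequently_le_norm_weightProd hT hx _ _)
  obtain ⟨n, hn, hgrowth⟩ := extraction_forall_of_frequently hfreq
  refine ⟨n, hn, fun k => (hgrowth k).1, fun i m => ?_⟩
  refine tendsto_atTop_mono' atTop ?_ tendsto_natCast_atTop_atTop
  filter_upwards [eventually_ge_atTop (m : ℕ)] with k hk
  exact (hgrowth k).2 i m <| Finset.mem_Iic.2 <| by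
    rw [← PNat.coe_le_coe, Nat.succPNat_coe]; omega

/-- If unilateral pseudo-shifts `T₁, …, T_N` possess a d-hypercyclic vector, then there is
a strictly increasing sequence `(n_k)` of positive integers along which all the weight
products `|W^{(i)}_{m,n_k}|` tend to infinity. -/
theorem stmt8 (p : ℝ≥0∞) [Fact (1 ≤ p)] (hp : p ≠ ⊤) (N : ℕ) (hN : 2 ≤ N)
    (f : Fin N → ℕ+ → ℕ+) (hf : ∀ i, StrictMono (f i)) (hf1 : ∀ i, 1 < f i 1)
    (w : Fin N → ℕ+ → ℂ) (hwb : ∀ i, ∃ C, ∀ m, ‖w i m‖ ≤ C) (hw0 : ∀ i m, w i m ≠ 0)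
    (T : Fin N → (lp (fun _ : ℕ+ => ℂ) p →L[ℂ] lp (fun _ : ℕ+ => ℂ) p))
    (hT : ∀ i (x : lp (fun _ : ℕ+ => ℂ) p) (m : ℕ+),
      (T i x : ∀ _ : ℕ+, ℂ) m = w i (f i m) * (x : ∀ _ : ℕ+, ℂ) (f i m))
    (x : lp (fun _ : ℕ+ => ℂ) p)
    (hx : Dense (Set.range fun nn : ℕ => fun i : Fin N => (T i ^ nn) x)) :
    ∃ n : ℕ → ℕ, StrictMono n ∧ (∀ k, 0 < n k) ∧
      ∀ i m, Tendsto
        (fun k => ‖∏ ν ∈ Finset.Icc 1 (n k), w i ((f i)^[ν] m)‖) atTop atTop :=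
  stmt8_general p N hN f w T hT x hx
end

section
/- Let T₁,…,T_N (N ≥ 2) be unilateral pseudo-shifts on ℓ^p(ℕ). If at least two of the underlying maps f_i and f_ℓ with i ≠ ℓ are equal, then T₁,…,T_N fail condition (iv)(b) of the d-weakly-mixing characterization: there is no n ∈ ℕ and M ∈ ℕ with f_ℓⁿ([M]) ∩ f_iⁿ([M]) = ∅. In particular, N ≥ 2 unilateral weighted backward shifts (all with shifting map m ↦ m+1) never satisfy the Disjoint Hypercyclicity Criterion. -/
theorem stmt10_general (N : ℕ) (f : Fin N → ℕ+ → ℕ+)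
    (i ℓ : Fin N) (hfeq : f i = f ℓ) :
    ¬ ∃ (n : ℕ) (M : ℕ+),
      {j : ℕ+ | ∃ m ≤ M, (f ℓ)^[n] m = j} ∩ {j : ℕ+ | ∃ m ≤ M, (f i)^[n] m = j} = ∅ := by
  rintro ⟨n, M, hdisj⟩
  rw [hfeq, Set.inter_self] at hdisj
  exact Set.eq_empty_iff_forall_notMem.mp hdisj _ ⟨1, one_le, rfl⟩

/-- If two of the shifting maps of a tuple of unilateral pseudo-shifts coincide, then for
no `n` and `M` are the sets `f_ℓⁿ([M])` and `f_iⁿ([M])` disjoint, so condition (iv)(b) of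
the d-weakly-mixing characterization fails.  In particular this applies to unilateral
weighted backward shifts, whose shifting maps are all `m ↦ m + 1`. -/
theorem stmt10 (N : ℕ) (hN : 2 ≤ N) (f : Fin N → ℕ+ → ℕ+)
    (hf : ∀ i, StrictMono (f i)) (hf1 : ∀ i, 1 < f i 1)
    (i ℓ : Fin N) (hil : i ≠ ℓ) (hfeq : f i = f ℓ) :
    ¬ ∃ (n : ℕ) (M : ℕ+),
      {j : ℕ+ | ∃ m ≤ M, (f ℓ)^[n] m = j} ∩ {j : ℕ+ | ∃ m ≤ M, (f i)^[n] m = j} = ∅ :=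
  stmt10_general N f i ℓ hfeq
end

section
/- Let T₁,…,T_N (N ≥ 2) be unilateral weighted backward shifts on ℓ^p(ℕ) with weight sequences ω^{(i)} = (w_m^{(i)}). If T₁,…,T_N are s-hypercyclic, then sup_{n≥1} min{|∏_{ν=1}^n w^{(i)}_{1+ν}| : 1 ≤ i ≤ N} = ∞; that is, Salas's condition for hypercyclicity of the direct sum T₁ ⊕ ⋯ ⊕ T_N holds. -/
/-!
Approximate the diagonal point `(y, …, y)` with `y = (R + 1) e₁` by a single orbit point
`(T₁ⁿ x, …, T_Nⁿ x)`. Reading off the first coordinate,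
`(Tᵢⁿ x)₁ = (∏_{ν=1}^n w^{(i)}_{1+ν}) x_{1+n}` has modulus more than `R`,
while `|x_{1+n}| ≤ ‖x‖`. Taking `R ≥ ‖x‖` rules out `n = 0`,
and taking `R ≥ C ‖x‖` forces every product to exceed `C`.
-/

open scoped ENNReal

theorem iterate_apply_of_apply_eq_mul_apply_succ {α R : Type*} [CommMonoid R] (S : α → α)
    (c : α → ℕ+ → R) (w : ℕ+ → R) (hS : ∀ x m, c (S x) m = w (m + 1) * c x (m + 1))
    (n : ℕ) (x : α) (m : ℕ+) :
    c (S^[n] x) m =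
      (∏ ν ∈ Finset.Icc 1 n, w ⟨m + ν, by positivity⟩) * c x ⟨m + n, by positivity⟩ := by
  induction n generalizing x with
  | zero =>
    rw [Function.iterate_zero_apply, Finset.Icc_eq_empty_of_lt zero_lt_one, Finset.prod_empty,
      one_mul]
    rfl
  | succ n ih =>
    rw [Function.iterate_succ_apply, ih, hS x (⟨m + n, by positivity⟩ : ℕ+),
      Finset.prod_Icc_succ_top (by omega), mul_assoc]
    rfl

theorem exists_forall_dist_lt_of_const_mem_closure_range {ι X : Type*} [Fintype ι]
    [PseudoMetricSpace X] {f : ℕ → ι → X} {y : X} (h : (fun _ => y) ∈ closure (Set.range f))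
    {ε : ℝ} (hε : 0 < ε) : ∃ n, ∀ i, dist (f n i) y < ε := by
  obtain ⟨_, ⟨n, rfl⟩, hn⟩ := Metric.mem_closure_iff.mp h ε hε
  exact ⟨n, fun i => dist_comm (f n i) y ▸ (dist_pi_lt_iff hε).mp hn i⟩

namespace lp

variable {α : Type*} {E : α → Type*} [∀ i, NormedAddCommGroup (E i)] {p : ℝ≥0∞} [Fact (1 ≤ p)]

theorem norm_apply_le_norm' (f : lp E p) (i : α) : ‖f i‖ ≤ ‖f‖ :=
  norm_apply_le_norm (zero_lt_one.trans_le Fact.out).ne' f i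

theorem norm_sub_lt_norm_apply_of_dist_single_lt [DecidableEq α] {f : lp E p} {i : α}
    {a : E i} {ε : ℝ} (h : dist f (lp.single p i a) < ε) : ‖a‖ - ε < ‖f i‖ := by
  have hclose := (norm_apply_le_norm' (f - lp.single p i a) i).trans_lt (dist_eq_norm f _ ▸ h)
  rw [coeFn_sub, Pi.sub_apply, lp.single_apply_self] at hclose
  linarith [norm_sub_norm_le a (f i), norm_sub_rev a (f i)]

end lp

/-- If unilateral weighted backward shifts `T₁, …, T_N` on ℓᵖ(ℕ) are s-hypercyclic, then
Salas's condition holds: `sup_n min_i |∏_{ν=1}^n w^{(i)}_{1+ν}| = ∞`, so the direct sum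
`T₁ ⊕ ⋯ ⊕ T_N` is hypercyclic. -/
theorem stmt13 (p : ℝ≥0∞) [Fact (1 ≤ p)] (N : ℕ) (hN : 2 ≤ N)
    (w : Fin N → ℕ+ → ℂ)
    (T : Fin N → (lp (fun _ : ℕ+ => ℂ) p →L[ℂ] lp (fun _ : ℕ+ => ℂ) p))
    (hT : ∀ i (x : lp (fun _ : ℕ+ => ℂ) p) (m : ℕ+),
      (T i x : ∀ _ : ℕ+, ℂ) m = w i (m + 1) * (x : ∀ _ : ℕ+, ℂ) (m + 1))
    (hs : ∃ x : lp (fun _ : ℕ+ => ℂ) p, ∀ y : lp (fun _ : ℕ+ => ℂ) p,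
      (fun _ : Fin N => y) ∈
        closure (Set.range fun nn : ℕ => fun i : Fin N => (T i ^ nn) x)) :
    ∀ C : ℝ, ∃ n : ℕ, 1 ≤ n ∧
      ∀ i, C < ‖∏ ν ∈ Finset.Icc 1 n, w i (⟨1 + ν, by omega⟩ : ℕ+)‖ := by
  intro C
  obtain ⟨x, hx⟩ := hs
  set R := max (C * ‖x‖) ‖x‖
  obtain ⟨n, hn⟩ := exists_forall_dist_lt_of_const_mem_closure_range
    (hx (lp.single p 1 ((R + 1 : ℝ) : ℂ))) one_pos
  have horbit : ∀ i, ((T i ^ n) x : ∀ _ : ℕ+, ℂ) 1 =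
      (∏ ν ∈ Finset.Icc 1 n, w i ⟨1 + ν, by omega⟩) * (x : ∀ _ : ℕ+, ℂ) ⟨1 + n, by omega⟩ := by
    intro i
    rw [hom_coe_pow (⇑) rfl (fun _ _ => rfl) (T i) n]
    exact iterate_apply_of_apply_eq_mul_apply_succ (T i) (⇑) (w i) (hT i) n x 1
  have hlarge : ∀ i, R < ‖∏ ν ∈ Finset.Icc 1 n, w i ⟨1 + ν, by omega⟩‖ * ‖x‖ := by
    intro i
    have hcoord := lp.norm_sub_lt_norm_apply_of_dist_single_lt (hn i)
    rw [Complex.norm_real, Real.norm_of_nonneg (by positivity), horbit, norm_mul] at hcoord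
    calc R = R + 1 - 1 := by ring
      _ < _ := hcoord
      _ ≤ _ := by gcongr; exact lp.norm_apply_le_norm' x _
  refine ⟨n, Nat.one_le_iff_ne_zero.mpr ?_, fun i => ?_⟩
  · rintro rfl
    have := hlarge ⟨0, by omega⟩
    rw [Finset.Icc_eq_empty_of_lt zero_lt_one, Finset.prod_empty, norm_one, one_mul] at this
    linarith [le_max_right (C * ‖x‖) ‖x‖]
  · exact lt_of_mul_lt_mul_right ((le_max_left _ _).trans_lt (hlarge i)) (norm_nonneg x)
end

section
/- Let X be a Banach space, T₁,…,T_N ∈ B(X) with N ≥ 2. If T₁,…,T_N satisfy the Simultaneous Blow-up/Collapse Property, then they are s-topologically transitive: for any nonempty open sets U, V ⊆ X there exists n ∈ ℕ with V ∩ T₁^{-n}(U) ∩ ⋯ ∩ T_N^{-n}(U) ≠ ∅. -/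
/-!
Shrink `U` and `V` to nonempty open `U'`, `V'` and pick an open `W ∋ 0` with `W + U' ⊆ U` and
`V' + W ⊆ V`. The blow-up/collapse property gives one `n`, a small `w ∈ W` with every `Tᵢⁿ w ∈ U'`
and some `v ∈ V'` with every `Tᵢⁿ v ∈ W`; by additivity `v + w ∈ V` and `Tᵢⁿ (v + w) ∈ U`.
-/

open Pointwise Topology

theorem add_preimage_sub_subset {X : Type*} [AddCommGroup X] {U W : Set X} {u : X}
    (hW : ∀ x ∈ W, ∀ y ∈ W, u + (x + y) ∈ U) : W + (· - u) ⁻¹' W ⊆ U := by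
  rintro _ ⟨x, hx, y, hy, rfl⟩
  have := hW x hx (y - u) hy
  rwa [add_left_comm, add_sub_cancel] at this

theorem exists_open_zero_mem_add_subset {X : Type*} [AddCommGroup X] [TopologicalSpace X]
    [IsTopologicalAddGroup X] {U V : Set X} (hU : IsOpen U) (hUne : U.Nonempty)
    (hV : IsOpen V) (hVne : V.Nonempty) :
    ∃ W U' V' : Set X, IsOpen W ∧ (0 : X) ∈ W ∧ IsOpen U' ∧ U'.Nonempty ∧ IsOpen V' ∧
      V'.Nonempty ∧ W + U' ⊆ U ∧ V' + W ⊆ V := by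
  obtain ⟨u, hu⟩ := hUne
  obtain ⟨v, hv⟩ := hVne
  have hnhds : (u + ·) ⁻¹' U ∩ (v + ·) ⁻¹' V ∈ 𝓝 (0 : X) := by
    refine Filter.inter_mem ?_ ?_
    · exact (continuous_const_add u).continuousAt.preimage_mem_nhds (by simpa using hU.mem_nhds hu)
    · exact (continuous_const_add v).continuousAt.preimage_mem_nhds (by simpa using hV.mem_nhds hv)
  obtain ⟨W, hWo, hW0, hWhalf⟩ := exists_open_nhds_zero_half hnhds
  have hshift : ∀ a : X, IsOpen ((· - a) ⁻¹' W) ∧ ((· - a) ⁻¹' W).Nonempty := fun a =>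
    ⟨hWo.preimage (continuous_sub_right a), a, by simpa using hW0⟩
  refine ⟨W, _, _, hWo, hW0, (hshift u).1, (hshift u).2, (hshift v).1, (hshift v).2,
    add_preimage_sub_subset fun x hx y hy => (hWhalf x hx y hy).1, ?_⟩
  rw [add_comm]
  exact add_preimage_sub_subset fun x hx y hy => (hWhalf x hx y hy).2

theorem add_mem_inter_iInter_preimage {X ι 𝓕 : Type*} [AddCommMagma X] [FunLike 𝓕 X X]
    [AddHomClass 𝓕 X X] (f : ι → 𝓕) {U V U' V' W : Set X} (hU : W + U' ⊆ U) (hV : V' + W ⊆ V)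
    {w v : X} (hw : w ∈ W ∩ ⋂ i, f i ⁻¹' U') (hv : v ∈ V' ∩ ⋂ i, f i ⁻¹' W) :
    v + w ∈ V ∩ ⋂ i, f i ⁻¹' U := by
  simp only [Set.mem_inter_iff, Set.mem_iInter, Set.mem_preimage] at hw hv ⊢
  refine ⟨hV (Set.add_mem_add hv.1 hw.1), fun i => ?_⟩
  rw [map_add]
  exact hU (Set.add_mem_add (hv.2 i) (hw.2 i))

theorem stmt19_general {X : Type*} [NormedAddCommGroup X] [NormedSpace ℂ X]
    (N : ℕ) (T : Fin N → X →L[ℂ] X)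
    (h : ∀ (W U V : Set X),
      IsOpen W → (0 : X) ∈ W → IsOpen U → U.Nonempty → IsOpen V → V.Nonempty →
      ∃ n : ℕ, (W ∩ ⋂ i, (T i ^ n) ⁻¹' U).Nonempty ∧
        (V ∩ ⋂ i, (T i ^ n) ⁻¹' W).Nonempty) :
    ∀ (U V : Set X), IsOpen U → U.Nonempty → IsOpen V → V.Nonempty →
      ∃ n : ℕ, (V ∩ ⋂ i, (T i ^ n) ⁻¹' U).Nonempty := by
  intro U V hU hUne hV hVne
  obtain ⟨W, U', V', hW, hW0, hU', hU'ne, hV', hV'ne, hWU, hVW⟩ :=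
    exists_open_zero_mem_add_subset hU hUne hV hVne
  obtain ⟨n, ⟨w, hw⟩, ⟨v, hv⟩⟩ := h W U' V' hW hW0 hU' hU'ne hV' hV'ne
  exact ⟨n, v + w, add_mem_inter_iInter_preimage (fun i => T i ^ n) hWU hVW hw hv⟩

/-- If `T₁, …, T_N` satisfy the Simultaneous Blow-up/Collapse Property, then they are
s-topologically transitive. -/
theorem stmt19 {X : Type*} [NormedAddCommGroup X] [NormedSpace ℂ X] [CompleteSpace X]
    (N : ℕ) (hN : 2 ≤ N) (T : Fin N → X →L[ℂ] X)
    (h : ∀ (W U V : Set X),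
      IsOpen W → (0 : X) ∈ W → IsOpen U → U.Nonempty → IsOpen V → V.Nonempty →
      ∃ n : ℕ, (W ∩ ⋂ i, (T i ^ n) ⁻¹' U).Nonempty ∧
        (V ∩ ⋂ i, (T i ^ n) ⁻¹' W).Nonempty) :
    ∀ (U V : Set X), IsOpen U → U.Nonempty → IsOpen V → V.Nonempty →
      ∃ n : ℕ, (V ∩ ⋂ i, (T i ^ n) ⁻¹' U).Nonempty :=
  stmt19_general N T h
end
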